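/- arXiv:2106.04183 — 8 statements merged into one kernel-verified Lean document; each statement's English description precedes it below -/
import Mathlib

section
/- Let A be an n×n real symmetric negative definite matrix, B an n×m real matrix, and R an m×k real matrix with R^T R positive definite. Then the matrix A + B(R^T R)⁻¹B^T A⁻¹ is Hurwitz (all eigenvalues have negative real part). -/
/-!
With `N = A * A + B (RᵀR)⁻¹ Bᵀ`, which is positive definite, the matrix equals `-(N * (-A)⁻¹)`,
minus a product of two positive definite matrices. Such a product `P * Q` has positive
eigenvalues: `P Q v = μ v` gives `(Q v)ᴴ P (Q v) = μ · vᴴ Q v`, a quotient of two positive numbers.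
-/

open Matrix

open scoped ComplexOrder

namespace Matrix

variable {n : Type*} [Fintype n] [DecidableEq n]

theorem exists_mulVec_eq_smul_of_mem_spectrum {K : Type*} [Field K] {M : Matrix n n K} {μ : K}
    (hμ : μ ∈ spectrum K M) : ∃ v, v ≠ 0 ∧ M *ᵥ v = μ • v := by
  rw [← spectrum_toLin', ← Module.End.hasEigenvalue_iff_mem_spectrum] at hμ
  obtain ⟨v, hv⟩ := hμ.exists_hasEigenvector
  exact ⟨v, hv.2, by simpa using Module.End.mem_eigenspace_iff.mp hv.1⟩

theorem det_map_ofReal (N : Matrix n n ℝ) : (N.map Complex.ofReal).det = N.det :=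
  (RingHom.map_det Complex.ofRealHom N).symm

open scoped MatrixOrder in
theorem PosDef.map_ofReal {N : Matrix n n ℝ} (hN : N.PosDef) :
    (N.map Complex.ofReal).PosDef := by
  obtain ⟨Y, rfl⟩ := CStarAlgebra.nonneg_iff_eq_star_mul_self.mp hN.posSemidef.nonneg
  have hmap : (star Y * Y).map Complex.ofReal = (Y.map Complex.ofReal)ᴴ * Y.map Complex.ofReal := by
    ext i j
    simp [mul_apply]
  rw [hmap, (posSemidef_conjTranspose_mul_self _).posDef_iff_det_ne_zero, ← hmap, det_map_ofReal]
  exact_mod_cast hN.det_pos.ne'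

theorem PosDef.pos_of_mem_spectrum_mul {P Q : Matrix n n ℂ} (hP : P.PosDef) (hQ : Q.PosDef)
    {μ : ℂ} (hμ : μ ∈ spectrum ℂ (P * Q)) : 0 < μ := by
  obtain ⟨v, hv0, hv⟩ := exists_mulVec_eq_smul_of_mem_spectrum hμ
  have hQv : Q *ᵥ v ≠ 0 :=
    (mulVec_injective_iff_isUnit.mpr hQ.isUnit).ne_iff' (mulVec_zero Q) |>.mpr hv0
  have hform : star (Q *ᵥ v) ⬝ᵥ (P *ᵥ (Q *ᵥ v)) = μ * (star v ⬝ᵥ (Q *ᵥ v)) := by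
    rw [mulVec_mulVec, hv, dotProduct_smul, smul_eq_mul, star_mulVec, ← dotProduct_mulVec,
      hQ.isHermitian.eq]
  have hQpos := hQ.dotProduct_mulVec_pos hv0
  have hμ_eq : μ = (star (Q *ᵥ v) ⬝ᵥ (P *ᵥ (Q *ᵥ v))) / (star v ⬝ᵥ (Q *ᵥ v)) := by
    rw [hform, mul_div_cancel_right₀ _ hQpos.ne']
  rw [hμ_eq]
  exact div_pos (hP.dotProduct_mulVec_pos hQv) hQpos

end Matrix

/-- If `A` is symmetric negative definite, `RᵀR ≻ 0`, then
`A + B (RᵀR)⁻¹ Bᵀ A⁻¹` is Hurwitz: every (complex) eigenvalue has negative real part. -/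
theorem stmt4
    {n m k : ℕ}
    (A : Matrix (Fin n) (Fin n) ℝ) (hA : (-A).PosDef)
    (B : Matrix (Fin n) (Fin m) ℝ)
    (R : Matrix (Fin k) (Fin m) ℝ) (hR : (Rᵀ * R).PosDef) :
    ∀ μ ∈ spectrum ℂ ((A + B * (Rᵀ * R)⁻¹ * Bᵀ * A⁻¹).map (Complex.ofReal)),
      μ.re < 0 := by
  intro μ hμ
  set S := B * (Rᵀ * R)⁻¹ * Bᵀ
  have hAsym : Aᵀ = A := by simpa using hA.isHermitian.eq
  have hAA : (A * A).PosDef := by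
    simpa [hAsym] using
      PosDef.conjTranspose_mul_self (-A) (mulVec_injective_iff_isUnit.mpr hA.isUnit)
  have hS : S.PosSemidef := by
    simpa using hR.posSemidef.inv.mul_mul_conjTranspose_same B
  have hdet : IsUnit A.det := by simpa [isUnit_iff_isUnit_det] using hA.isUnit
  have hM : A + S * A⁻¹ = -((A * A + S) * (-A)⁻¹) := by
    rw [inv_eq_left_inv (A := -A) (B := -A⁻¹) (by simp [nonsing_inv_mul _ hdet]), mul_neg,
      neg_neg, add_mul, mul_nonsing_inv_cancel_right _ _ hdet]
  change μ ∈ spectrum ℂ (Complex.ofRealHom.mapMatrix _) at hμ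
  rw [hM, map_neg, map_mul, ← spectrum.neg_eq, Set.mem_neg] at hμ
  have hneg_pos :=
    PosDef.pos_of_mem_spectrum_mul (hAA.add_posSemidef hS).map_ofReal hA.inv.map_ofReal hμ
  simpa using (Complex.pos_iff.mp hneg_pos).1
end

section
/- Let A be an n×n real symmetric negative definite matrix, B ∈ ℝ^{n×m}, and R ∈ ℝ^{m×k} with R^T R ≻ 0. Set P := -A⁻¹ (which is symmetric positive definite) and A_cl := A + B(R^T R)⁻¹B^T A⁻¹. Then A_cl^T P + P A_cl ⪯ -I (i.e., ⟨A_cl z, Pz⟩ + ⟨Pz, A_cl z⟩ ≤ -⟨z,z⟩ for all z). -/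
/-!
Write `y = A⁻¹ z`. Since `P = -A⁻¹` and `A_cl z = A z + M y` with `M = B (RᵀR)⁻¹ Bᵀ ⪰ 0`,
symmetry of `A` gives `⟨A_cl z, A⁻¹ z⟩ = ⟨z, z⟩ + ⟨M y, y⟩ ≥ ⟨z, z⟩`, so the left-hand side is
at most `-2 ⟨z, z⟩ ≤ -⟨z, z⟩`.
-/

open Matrix

namespace Matrix

variable {n : Type*} [Fintype n] [DecidableEq n]

theorem mulVec_dotProduct_inv_mulVec_of_transpose_eq {R : Type*} [CommRing R]
    {A : Matrix n n R} (hA : Aᵀ = A) (hdet : IsUnit A.det) (z : n → R) :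
    (A *ᵥ z) ⬝ᵥ (A⁻¹ *ᵥ z) = z ⬝ᵥ z := by
  rw [dotProduct_comm, dotProduct_mulVec, ← hA, vecMul_transpose, hA, mulVec_mulVec,
    mul_nonsing_inv _ hdet, one_mulVec]

theorem dotProduct_self_le_add_mul_inv_mulVec_dotProduct {A M : Matrix n n ℝ} (hA : Aᵀ = A)
    (hdet : IsUnit A.det) (hM : M.PosSemidef) (z : n → ℝ) :
    z ⬝ᵥ z ≤ ((A + M * A⁻¹) *ᵥ z) ⬝ᵥ (A⁻¹ *ᵥ z) := by
  rw [add_mulVec, add_dotProduct, mulVec_dotProduct_inv_mulVec_of_transpose_eq hA hdet,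
    ← mulVec_mulVec, dotProduct_comm (M *ᵥ _)]
  exact le_add_of_nonneg_right (by simpa using hM.dotProduct_mulVec_nonneg (A⁻¹ *ᵥ z))

end Matrix

/-- With `P = -A⁻¹` and `A_cl = A + B(RᵀR)⁻¹BᵀA⁻¹`, the Lyapunov inequality
`⟨A_cl z, P z⟩ + ⟨P z, A_cl z⟩ ≤ -⟨z, z⟩` holds for all `z`. -/
theorem stmt5
    {n m k : ℕ}
    (A : Matrix (Fin n) (Fin n) ℝ) (hA : (-A).PosDef)
    (B : Matrix (Fin n) (Fin m) ℝ)
    (R : Matrix (Fin k) (Fin m) ℝ) (hR : (Rᵀ * R).PosDef)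
    (P : Matrix (Fin n) (Fin n) ℝ) (hP : P = -A⁻¹)
    (Acl : Matrix (Fin n) (Fin n) ℝ) (hAcl : Acl = A + B * (Rᵀ * R)⁻¹ * Bᵀ * A⁻¹) :
    ∀ z : Fin n → ℝ,
      (Acl *ᵥ z) ⬝ᵥ (P *ᵥ z) + (P *ᵥ z) ⬝ᵥ (Acl *ᵥ z) ≤ -(z ⬝ᵥ z) := by
  intro z
  subst hP hAcl
  have hsymm : Aᵀ = A := by simpa using hA.isHermitian.eq
  have hdet : IsUnit A.det := (isUnit_iff_isUnit_det A).mp (by simpa using hA.isUnit.neg)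
  have hM : (B * (Rᵀ * R)⁻¹ * Bᵀ).PosSemidef := by
    simpa using hR.inv.posSemidef.mul_mul_conjTranspose_same B
  have key := dotProduct_self_le_add_mul_inv_mulVec_dotProduct hsymm hdet hM z
  have hzz : 0 ≤ z ⬝ᵥ z := by simpa using dotProduct_self_star_nonneg z
  rw [neg_mulVec, dotProduct_neg, neg_dotProduct, dotProduct_comm (A⁻¹ *ᵥ z)]
  linarith
end

section
/- Let A be a bounded self-adjoint strictly negative operator on Z, B ∈ L(U,Z), R ∈ L(U,R') with R*R coercive. Let G(jω) := [I; R(R*R)⁻¹B*A⁻¹] (jωI - A - B(R*R)⁻¹B*A⁻¹)⁻¹. Then for all real ω, ‖G(jω)‖ ≤ ‖G(0)‖; i.e., the closed-loop transfer function attains its maximum gain at frequency zero. -/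
open scoped ComplexInnerProductSpace
open ContinuousLinearMap

/-! Put `K = (R*R)⁻¹` and `S = A² + BKB*`, so that `Acl A = S` and
`‖F (A w)‖² = re ⟪S w, w⟫`; in particular `S` is positive. For
`x = (jωI - Acl) A u = jω A u - S u` the cross terms of `⟪x, S⁻¹ x⟫` cancel because `A` is
self-adjoint, leaving `⟪x, S⁻¹ x⟫ = ω² ⟪A u, S⁻¹ A u⟫ + ⟪S u, u⟫`, whose real part is at least
`re ⟪S u, u⟫ = ‖F (A u)‖²`, while `re ⟪x, S⁻¹ x⟫ = ‖F ((-Acl)⁻¹ x)‖²`. -/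

namespace IsSelfAdjoint

variable {M : Type*} [Monoid M] [StarMul M] {a b : M}

theorem star_mul_eq_one_of_mul_eq_one (ha : IsSelfAdjoint a) (h : a * b = 1) :
    star b * a = 1 := by
  simpa [ha.star_eq] using congrArg star h

theorem of_mul_eq_one (ha : IsSelfAdjoint a) (h : a * b = 1) : IsSelfAdjoint b :=
  calc star b = star b * (a * b) := by rw [h, mul_one]
    _ = b := by rw [← mul_assoc, ha.star_mul_eq_one_of_mul_eq_one h, one_mul]

theorem mul_eq_one_symm (ha : IsSelfAdjoint a) (h : a * b = 1) : b * a = 1 := by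
  simpa [(ha.of_mul_eq_one h).star_eq] using ha.star_mul_eq_one_of_mul_eq_one h

end IsSelfAdjoint

section

variable {E : Type*} [NormedAddCommGroup E] [InnerProductSpace ℂ E] [CompleteSpace E]

theorem re_inner_le_re_inner_of_mul_eq_one {S T A : E →L[ℂ] E} (hS : S.IsPositive)
    (hST : S * T = 1) (hA : IsSelfAdjoint A) (ω : ℝ) (u : E) :
    (⟪S u, u⟫).re ≤
      (⟪(ω * Complex.I) • A u - S u, T ((ω * Complex.I) • A u - S u)⟫).re := by
  have hTS : T (S u) = u := by
    simpa using congrArg (· u) (hS.isSelfAdjoint.mul_eq_one_symm hST)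
  have hSTA : S (T (A u)) = A u := by simpa using congrArg (· (A u)) hST
  have hcross : ⟪S u, T (A u)⟫ = ⟪A u, u⟫ := by
    rw [hS.inner_left_eq_inner_right, hSTA]; exact (hA.isSymmetric u u).symm
  have hpos : 0 ≤ (⟪A u, T (A u)⟫).re := by
    simpa [hSTA] using hS.re_inner_nonneg_left (T (A u))
  have key : ⟪(ω * Complex.I) • A u - S u, T ((ω * Complex.I) • A u - S u)⟫
      = ((ω ^ 2 : ℝ) : ℂ) * ⟪A u, T (A u)⟫ + ⟪S u, u⟫ := by
    simp only [map_sub, map_smul, hTS, inner_sub_left, inner_sub_right, inner_smul_left,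
      inner_smul_right, hcross, map_mul, Complex.conj_ofReal, Complex.conj_I]
    push_cast
    linear_combination (-(ω : ℂ) ^ 2 * ⟪A u, T (A u)⟫) * Complex.I_sq
  rw [key, Complex.add_re, Complex.re_ofReal_mul]
  nlinarith [sq_nonneg ω]

theorem norm_comp_le_norm_comp_of_resolvent {Y : Type*} [SeminormedAddCommGroup Y]
    [NormedSpace ℂ Y] {A Ainv Acl S Resω Res0 : E →L[ℂ] E} {G : E →L[ℂ] Y}
    (hA : IsSelfAdjoint A) (hAinv : A ∘L Ainv = 1) (hS : IsSelfAdjoint S)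
    (hAclA : Acl ∘L A = S) (hG : ∀ w, ‖G (A w)‖ ^ 2 = (⟪S w, w⟫).re) (ω : ℝ)
    (hResω : ((ω * Complex.I) • (1 : E →L[ℂ] E) - Acl) ∘L Resω = 1)
    (hRes0 : (-Acl) ∘L Res0 = 1) :
    ‖G ∘L Resω‖ ≤ ‖G ∘L Res0‖ := by
  have hAinv' (z : E) : A (Ainv z) = z := by simpa using congrArg (· z) hAinv
  have hSA (z : E) : S (Ainv z) = Acl z := by rw [← hAclA, comp_apply, hAinv']
  have hSpos : S.IsPositive :=
    isPositive_def'.2 ⟨hS, fun w => (sq_nonneg _).trans_eq (hG w)⟩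
  have hST : S * -(Ainv ∘L Res0) = 1 := by
    ext z; simpa [hSA] using congrArg (· z) hRes0
  refine opNorm_le_bound _ (norm_nonneg _) fun x => ?_
  set u := Ainv (Resω x)
  have hx : x = (ω * Complex.I) • A u - S u := by
    simpa [u, hSA, hAinv'] using (congrArg (· x) hResω).symm
  have hω : ‖G (Resω x)‖ ^ 2 = (⟪S u, u⟫).re := by rw [← hG, hAinv']
  have h0 : ‖G (Res0 x)‖ ^ 2 = (⟪x, -(Ainv ∘L Res0) x⟫).re := by
    have hx0 : Acl (Res0 x) = -x :=
      neg_eq_iff_eq_neg.1 (by simpa using congrArg (· x) hRes0)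
    rw [← hAinv' (Res0 x), hG, hSA, hx0]
    simp
  have hsq : ‖G (Resω x)‖ ^ 2 ≤ ‖G (Res0 x)‖ ^ 2 := by
    rw [hω, h0, hx]
    exact re_inner_le_re_inner_of_mul_eq_one hSpos hST hA ω u
  calc ‖(G ∘L Resω) x‖ ≤ ‖G (Res0 x)‖ :=
        (pow_le_pow_iff_left₀ (norm_nonneg _) (norm_nonneg _) two_ne_zero).1 hsq
    _ ≤ ‖G ∘L Res0‖ * ‖x‖ := (G ∘L Res0).le_opNorm x

end

section

variable {Z U R' : Type*}
  [NormedAddCommGroup Z] [InnerProductSpace ℂ Z] [CompleteSpace Z]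
  [NormedAddCommGroup U] [InnerProductSpace ℂ U] [CompleteSpace U]
  [NormedAddCommGroup R'] [InnerProductSpace ℂ R'] [CompleteSpace R']

theorem norm_sq_apply_of_adjoint_comp_self_comp_eq_one {R : U →L[ℂ] R'}
    {K : U →L[ℂ] U} (hK : (adjoint R ∘L R) ∘L K = 1) (y : U) : ‖R (K y)‖ ^ 2 = (⟪K y, y⟫).re := by
  have hRK : adjoint R (R (K y)) = y := by simpa using congrArg (· y) hK
  rw [← inner_self_eq_norm_sq (𝕜 := ℂ), ← adjoint_inner_left, hRK, inner_re_symm]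
  rfl

theorem norm_sq_prod_apply_eq_re_inner {A Ainv : Z →L[ℂ] Z} {B : U →L[ℂ] Z}
    {R : U →L[ℂ] R'} {K : U →L[ℂ] U} (hA : IsSelfAdjoint A) (hAinv : Ainv ∘L A = 1)
    (hK : (adjoint R ∘L R) ∘L K = 1) (w : Z) :
    ‖(((WithLp.prodContinuousLinearEquiv 2 ℂ Z R').symm : Z × R' →L[ℂ] WithLp 2 (Z × R')) ∘L
        (ContinuousLinearMap.id ℂ Z).prod (R ∘L K ∘L adjoint B ∘L Ainv)) (A w)‖ ^ 2 =
      (⟪(A ∘L A + B ∘L K ∘L adjoint B) w, w⟫).re := by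
  have hAinv' : Ainv (A w) = w := by simpa using congrArg (· w) hAinv
  have hAA : ⟪A (A w), w⟫ = ⟪A w, A w⟫ := hA.isSymmetric (A w) w
  have hBKB : ⟪B (K (adjoint B w)), w⟫ = ⟪K (adjoint B w), adjoint B w⟫ :=
    (adjoint_inner_right B _ w).symm
  rw [WithLp.prod_norm_sq_eq_of_L2]
  simp only [comp_apply, prod_apply, id_apply, hAinv', add_apply, inner_add_left, hAA, hBKB,
    Complex.add_re]
  rw [← norm_sq_apply_of_adjoint_comp_self_comp_eq_one hK, ← inner_self_eq_norm_sq (𝕜 := ℂ)]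
  rfl

end

theorem stmt7_general
    {Z U R' : Type*}
    [NormedAddCommGroup Z] [InnerProductSpace ℂ Z] [CompleteSpace Z]
    [NormedAddCommGroup U] [InnerProductSpace ℂ U] [CompleteSpace U]
    [NormedAddCommGroup R' ] [InnerProductSpace ℂ R'] [CompleteSpace R']
    (A : Z →L[ℂ] Z) (hA : IsSelfAdjoint A)
    (B : U →L[ℂ] Z) (R : U →L[ℂ] R')
    (Ainv : Z →L[ℂ] Z) (hAinv₁ : A ∘L Ainv = 1)
    (RRinv : U →L[ℂ] U) (hRRinv₁ : (adjoint R ∘L R) ∘L RRinv = 1)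
    -- closed-loop generator and output operator
    (Acl : Z →L[ℂ] Z) (hAcl : Acl = A + B ∘L RRinv ∘L adjoint B ∘L Ainv)
    (F : Z →L[ℂ] WithLp 2 (Z × R'))
    (hF : F = ((WithLp.prodContinuousLinearEquiv 2 ℂ Z R').symm :
                Z × R' →L[ℂ] WithLp 2 (Z × R')) ∘L
          (ContinuousLinearMap.id ℂ Z).prod (R ∘L RRinv ∘L adjoint B ∘L Ainv))
    -- resolvents of the closed loop at frequency `ω` and at frequency `0`
    (ω : ℝ) (Resω : Z →L[ℂ] Z)
    (hResω₁ : (((ω : ℂ) * Complex.I) • (1 : Z →L[ℂ] Z) - Acl) ∘L Resω = 1)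
    (Res0 : Z →L[ℂ] Z)
    (hRes0₁ : (-Acl) ∘L Res0 = 1) :
    ‖F ∘L Resω‖ ≤ ‖F ∘L Res0‖ := by
  have hAinv₂ : Ainv ∘L A = 1 := hA.mul_eq_one_symm hAinv₁
  have hRRinv : IsSelfAdjoint RRinv :=
    (isPositive_adjoint_comp_self R).isSelfAdjoint.of_mul_eq_one hRRinv₁
  have hS : IsSelfAdjoint (A ∘L A + B ∘L RRinv ∘L adjoint B) := by
    refine IsSelfAdjoint.add ?_ (hRRinv.conj_adjoint B)
    simpa [hA.adjoint_eq] using (isPositive_adjoint_comp_self A).isSelfAdjoint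
  have hAclA : Acl ∘L A = A ∘L A + B ∘L RRinv ∘L adjoint B := by
    rw [hAcl, add_comp, comp_assoc, comp_assoc, comp_assoc, hAinv₂]
    rfl
  subst hF
  exact norm_comp_le_norm_comp_of_resolvent hA hAinv₁ hS hAclA
    (norm_sq_prod_apply_eq_re_inner hA hAinv₂ hRRinv₁) ω hResω₁ hRes0₁

/-- The closed-loop transfer function
`G(jω) = [I; R(R*R)⁻¹B*A⁻¹](jωI - A - B(R*R)⁻¹B*A⁻¹)⁻¹` attains its maximum gain at `ω = 0`:
`‖G(jω)‖ ≤ ‖G(0)‖` for all real `ω`. -/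
theorem stmt7
    {Z U R' : Type*}
    [NormedAddCommGroup Z] [InnerProductSpace ℂ Z] [CompleteSpace Z]
    [NormedAddCommGroup U] [InnerProductSpace ℂ U] [CompleteSpace U]
    [NormedAddCommGroup R' ] [InnerProductSpace ℂ R'] [CompleteSpace R']
    (A : Z →L[ℂ] Z) (hA : IsSelfAdjoint A)
    (m : ℝ) (hm : 0 < m) (hAneg : ∀ z : Z, (⟪A z, z⟫).re ≤ -m * ‖z‖ ^ 2)
    (B : U →L[ℂ] Z) (R : U →L[ℂ] R')
    (c : ℝ) (hc : 0 < c) (hR : ∀ u : U, c * ‖u‖ ^ 2 ≤ (⟪(adjoint R ∘L R) u, u⟫).re)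
    (Ainv : Z →L[ℂ] Z) (hAinv₁ : A ∘L Ainv = 1) (hAinv₂ : Ainv ∘L A = 1)
    (RRinv : U →L[ℂ] U) (hRRinv₁ : (adjoint R ∘L R) ∘L RRinv = 1)
    (hRRinv₂ : RRinv ∘L (adjoint R ∘L R) = 1)
    -- closed-loop generator and output operator
    (Acl : Z →L[ℂ] Z) (hAcl : Acl = A + B ∘L RRinv ∘L adjoint B ∘L Ainv)
    (F : Z →L[ℂ] WithLp 2 (Z × R'))
    (hF : F = ((WithLp.prodContinuousLinearEquiv 2 ℂ Z R').symm :
                Z × R' →L[ℂ] WithLp 2 (Z × R')) ∘L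
          (ContinuousLinearMap.id ℂ Z).prod (R ∘L RRinv ∘L adjoint B ∘L Ainv))
    -- resolvents of the closed loop at frequency `ω` and at frequency `0`
    (ω : ℝ) (Resω : Z →L[ℂ] Z)
    (hResω₁ : (((ω : ℂ) * Complex.I) • (1 : Z →L[ℂ] Z) - Acl) ∘L Resω = 1)
    (hResω₂ : Resω ∘L (((ω : ℂ) * Complex.I) • (1 : Z →L[ℂ] Z) - Acl) = 1)
    (Res0 : Z →L[ℂ] Z)
    (hRes0₁ : (-Acl) ∘L Res0 = 1) (hRes0₂ : Res0 ∘L (-Acl) = 1) :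
    ‖F ∘L Resω‖ ≤ ‖F ∘L Res0‖ :=
  stmt7_general A hA B R Ainv hAinv₁ RRinv hRRinv₁ Acl hAcl F hF ω Resω hResω₁ Res0 hRes0₁
end

section
/- Let A ∈ ℝ^{n×n} be symmetric negative definite, B ∈ ℝ^{n×m}, H ∈ ℝ^{n×p}, and R ∈ ℝ^{m×m} with R^T R ≻ 0. With state feedback K = (R^T R)⁻¹B^T A⁻¹, the DC gain of the closed loop from d to ζ = (z, Ru) satisfies ‖G_K(0)‖ = ‖H^T (A² + B(R^T R)⁻¹B^T)⁻¹ H‖^{1/2}, where G_K(0) = -[I; R(R^T R)⁻¹B^T A⁻¹](A + B(R^T R)⁻¹B^T A⁻¹)⁻¹ H. -/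
open Matrix

/-- The spectral (ℓ² → ℓ²) operator norm of a real matrix. -/
noncomputable def specNorm {p q : Type*} [Fintype p] [Fintype q] [DecidableEq q]
    (M : Matrix p q ℝ) : ℝ :=
  ‖LinearMap.toContinuousLinearMap (Matrix.toEuclideanLin M)‖

/-!
With `Q = RᵀR` and `M = A² + BQ⁻¹Bᵀ`, the feedback `K = Q⁻¹BᵀA⁻¹` factors the closed-loop matrix as
`A + BK = MA⁻¹`, and `A (I + KᵀQK) A = M`. Hence the Gram matrix of `G = -[I; RK](A + BK)⁻¹H` is
`GᵀG = HᵀM⁻¹ (A (I + KᵀQK) A) M⁻¹H = HᵀM⁻¹H`, and the C*-identity `‖G‖² = ‖GᵀG‖` of the spectral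
norm gives the claim.
-/

namespace Matrix

section SpectralNorm

open scoped Matrix.Norms.L2Operator

variable {p q : Type*} [Fintype p] [Fintype q] [DecidableEq q]

theorem specNorm_eq_l2_opNorm (M : Matrix p q ℝ) : specNorm M = ‖M‖ := rfl

theorem specNorm_eq_sqrt_specNorm_transpose_mul_self (M : Matrix p q ℝ) :
    specNorm M = √(specNorm (Mᵀ * M)) := by
  rw [specNorm_eq_l2_opNorm, specNorm_eq_l2_opNorm, ← conjTranspose_eq_transpose_of_trivial,
    l2_opNorm_conjTranspose_mul_self, Real.sqrt_mul_self (norm_nonneg _)]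

end SpectralNorm

section FeedbackAlgebra

variable {ι κ π α : Type*} [Fintype ι] [DecidableEq ι] [Fintype κ] [CommRing α]

/-- The paper's `G_K(0)`: the DC gain from `d` to `ζ = (z, Ru)` under the feedback `u = Kz`. -/
noncomputable def closedLoopDCGain (A : Matrix ι ι α) (B : Matrix ι κ α) (H : Matrix ι π α)
    (R : Matrix κ κ α) (K : Matrix κ ι α) : Matrix (ι ⊕ κ) π α :=
  -(fromRows (1 : Matrix ι ι α) (R * K)) * (A + B * K)⁻¹ * H

theorem transpose_fromRows_one_mul_self (N : Matrix κ ι α) :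
    (fromRows (1 : Matrix ι ι α) N)ᵀ * fromRows (1 : Matrix ι ι α) N = 1 + Nᵀ * N := by
  rw [transpose_fromRows, fromCols_mul_fromRows, transpose_one, Matrix.one_mul]

theorem add_mul_feedback_eq {A : Matrix ι ι α} (hA : IsUnit A.det) (B : Matrix ι κ α)
    (S : Matrix κ κ α) : A + B * (S * Bᵀ * A⁻¹) = (A * A + B * S * Bᵀ) * A⁻¹ := by
  rw [Matrix.add_mul, Matrix.mul_assoc A A, mul_nonsing_inv A hA, Matrix.mul_one]
  simp only [Matrix.mul_assoc]

variable [DecidableEq κ]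

theorem mul_one_add_feedback_mul_eq {A : Matrix ι ι α} (hAT : Aᵀ = A) (hA : IsUnit A.det)
    (B : Matrix ι κ α) {Q : Matrix κ κ α} (hQT : Qᵀ = Q) (hQ : IsUnit Q.det) :
    A * (1 + (Q⁻¹ * Bᵀ * A⁻¹)ᵀ * Q * (Q⁻¹ * Bᵀ * A⁻¹)) * A = A * A + B * Q⁻¹ * Bᵀ := by
  have hKT : (Q⁻¹ * Bᵀ * A⁻¹)ᵀ = A⁻¹ * B * Q⁻¹ := by
    rw [transpose_mul, transpose_mul, transpose_nonsing_inv, transpose_nonsing_inv, hAT, hQT,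
      transpose_transpose, Matrix.mul_assoc]
  rw [hKT, Matrix.mul_add, Matrix.add_mul, Matrix.mul_one]
  congr 1
  simp only [← Matrix.mul_assoc]
  rw [mul_nonsing_inv A hA, Matrix.one_mul, nonsing_inv_mul_cancel_right Q _ hQ,
    nonsing_inv_mul_cancel_right A _ hA]

theorem transpose_mul_self_closedLoopDCGain {A : Matrix ι ι α} (hAT : Aᵀ = A)
    (hA : IsUnit A.det) (B : Matrix ι κ α) (H : Matrix ι π α) {R : Matrix κ κ α}
    (hR : IsUnit (Rᵀ * R).det) (hM : IsUnit (A * A + B * (Rᵀ * R)⁻¹ * Bᵀ).det) :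
    (closedLoopDCGain A B H R ((Rᵀ * R)⁻¹ * Bᵀ * A⁻¹))ᵀ *
        closedLoopDCGain A B H R ((Rᵀ * R)⁻¹ * Bᵀ * A⁻¹) =
      Hᵀ * (A * A + B * (Rᵀ * R)⁻¹ * Bᵀ)⁻¹ * H := by
  set Q := Rᵀ * R
  set K := Q⁻¹ * Bᵀ * A⁻¹
  set M := A * A + B * Q⁻¹ * Bᵀ
  set F := fromRows (1 : Matrix ι ι α) (R * K) with hF
  have hQT : Qᵀ = Q := by rw [transpose_mul, transpose_transpose]
  have hMT : Mᵀ = M := by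
    simp only [M, transpose_add, transpose_mul, transpose_nonsing_inv, hAT, hQT,
      transpose_transpose, Matrix.mul_assoc]
  have hclosed : (A + B * K)⁻¹ = A * M⁻¹ := by
    rw [add_mul_feedback_eq hA, mul_inv_rev, nonsing_inv_nonsing_inv A hA]
  have hgram : A * (Fᵀ * F) * A = M := by
    refine Eq.trans ?_ (mul_one_add_feedback_mul_eq hAT hA B hQT hR)
    rw [transpose_fromRows_one_mul_self, transpose_mul]
    simp only [Q, K, Matrix.mul_assoc]
  calc (closedLoopDCGain A B H R K)ᵀ * closedLoopDCGain A B H R K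
      = Hᵀ * M⁻¹ * (A * (Fᵀ * F) * A) * M⁻¹ * H := by
        simp only [closedLoopDCGain, hclosed, transpose_mul, transpose_neg, Matrix.neg_mul,
          Matrix.mul_neg, neg_neg, transpose_nonsing_inv, hAT, hMT, Matrix.mul_assoc, ← hF]
    _ = Hᵀ * M⁻¹ * H := by rw [hgram, nonsing_inv_mul_cancel_right M _ hM]

end FeedbackAlgebra

theorem posDef_mul_self_add_mul_mul_transpose {ι κ : Type*} [Fintype ι] [DecidableEq ι]
    [Fintype κ] {A : Matrix ι ι ℝ} (hAT : Aᵀ = A) (hA : IsUnit A.det) {S : Matrix κ κ ℝ}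
    (hS : S.PosDef) (B : Matrix ι κ ℝ) : (A * A + B * S * Bᵀ).PosDef := by
  have hAA : (Aᴴ * A).PosDef := .conjTranspose_mul_self A <|
    mulVec_injective_iff_isUnit.mpr <| (isUnit_iff_isUnit_det A).mpr hA
  rw [conjTranspose_eq_transpose_of_trivial, hAT] at hAA
  simpa only [conjTranspose_eq_transpose_of_trivial] using
    hAA.add_posSemidef (hS.posSemidef.mul_mul_conjTranspose_same B)

end Matrix

/-- With `K = (RᵀR)⁻¹BᵀA⁻¹`, the DC gain of the closed loop satisfies
`‖G_K(0)‖ = ‖Hᵀ(A² + B(RᵀR)⁻¹Bᵀ)⁻¹H‖^{1/2}`. -/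
theorem stmt8
    {n m p : ℕ}
    (A : Matrix (Fin n) (Fin n) ℝ) (hA : (-A).PosDef)
    (B : Matrix (Fin n) (Fin m) ℝ)
    (H : Matrix (Fin n) (Fin p) ℝ)
    (R : Matrix (Fin m) (Fin m) ℝ) (hR : (Rᵀ * R).PosDef)
    (K : Matrix (Fin m) (Fin n) ℝ) (hK : K = (Rᵀ * R)⁻¹ * Bᵀ * A⁻¹)
    (G0 : Matrix (Fin n ⊕ Fin m) (Fin p) ℝ)
    (hG0 : G0 = -(fromRows (1 : Matrix (Fin n) (Fin n) ℝ) (R * K)) * (A + B * K)⁻¹ * H) :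
    specNorm G0 = Real.sqrt (specNorm (Hᵀ * (A * A + B * (Rᵀ * R)⁻¹ * Bᵀ)⁻¹ * H)) := by
  have hAT : Aᵀ = A := IsSymm.eq <| by simpa using hA.isHermitian.neg
  have hAu : IsUnit A.det := (isUnit_iff_isUnit_det A).mp <| by simpa using hA.isUnit.neg
  have hM := posDef_mul_self_add_mul_mul_transpose hAT hAu hR.inv B
  subst hK hG0
  change specNorm (closedLoopDCGain A B H R _) = _
  rw [specNorm_eq_sqrt_specNorm_transpose_mul_self, transpose_mul_self_closedLoopDCGain hAT hAu B H
    ((isUnit_iff_isUnit_det _).mp hR.isUnit) ((isUnit_iff_isUnit_det _).mp hM.isUnit)]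
end

section
/- Let A ∈ ℝ^{n×n} be symmetric negative definite, B ∈ ℝ^{n×m}, H ∈ ℝ^{n×p}, R ∈ ℝ^{m×m} with R^T R ≻ 0. For any K ∈ ℝ^{m×n} such that A + BK is invertible, the DC closed-loop gain satisfies ‖[I; RK](A + BK)⁻¹H‖ ≥ ‖H^T(A² + B(R^T R)⁻¹B^T)⁻¹H‖^{1/2}. -/
/-!
Put `C = [A, BR⁻¹]` and `U = [I; RK]`. Then `C U = A + BK` and, `A` being symmetric,
`C Cᵀ = A² + B(RᵀR)⁻¹Bᵀ`; in particular `C Cᵀ` is invertible because `C U` is. The closed-loop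
gain `G = U (A + BK)⁻¹ H` solves `C G = H`, and so does the least-norm solution
`S = Cᵀ (C Cᵀ)⁻¹ H`, which satisfies `Sᵀ (G - S) = 0`. By Pythagoras `‖S x‖ ≤ ‖G x‖` for every
`x`, so `‖S‖ ≤ ‖G‖`, while `SᵀS = Hᵀ (C Cᵀ)⁻¹ H` gives `‖S‖² = ‖Hᵀ (C Cᵀ)⁻¹ H‖`.
-/

open Matrix

open scoped Matrix.Norms.L2Operator

namespace Matrix

variable {ι κ ρ : Type*} [Fintype ι] [Fintype ρ] [DecidableEq ρ]

lemma specNorm_nonneg [Fintype κ] [DecidableEq κ] (M : Matrix ι κ ℝ) : 0 ≤ specNorm M :=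
  norm_nonneg _

lemma specNorm_transpose_mul_self [Fintype κ] [DecidableEq κ] (M : Matrix ι κ ℝ) :
    specNorm (Mᵀ * M) = specNorm M ^ 2 := by
  rw [sq, ← conjTranspose_eq_transpose_of_trivial]
  exact l2_opNorm_conjTranspose_mul_self M

lemma inner_toEuclideanLin_toEuclideanLin [Fintype κ] [DecidableEq κ] (S G : Matrix ι κ ℝ)
    (x : EuclideanSpace ℝ κ) :
    inner ℝ (toEuclideanLin S x) (toEuclideanLin G x) = x.ofLp ⬝ᵥ ((Sᵀ * G) *ᵥ x.ofLp) := by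
  rw [EuclideanSpace.inner_eq_star_dotProduct, star_trivial]
  simp only [toLpLin_apply, ← mulVec_mulVec, mulVec_transpose, dotProduct_comm x.ofLp,
    ← dotProduct_mulVec]

lemma specNorm_le_of_transpose_mul_eq [Fintype κ] [DecidableEq κ] {S G : Matrix ι κ ℝ}
    (h : Sᵀ * G = Sᵀ * S) : specNorm S ≤ specNorm G := by
  refine ContinuousLinearMap.opNorm_le_bound _ (specNorm_nonneg G) fun x => ?_
  set s := toEuclideanLin S x
  set g := toEuclideanLin G x
  have hsg : ‖s‖ ^ 2 = inner ℝ s g := by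
    rw [← real_inner_self_eq_norm_sq, inner_toEuclideanLin_toEuclideanLin,
      inner_toEuclideanLin_toEuclideanLin, h]
  have hs : ‖s‖ ≤ ‖g‖ := by
    nlinarith [real_inner_le_norm s g, norm_nonneg s, norm_nonneg g]
  exact hs.trans ((LinearMap.toContinuousLinearMap (toEuclideanLin G)).le_opNorm x)

/-- Column by column, the least-norm solution `ζ` of `C ζ = Y`. -/
noncomputable def minNormSolution (C : Matrix ρ ι ℝ) (Y : Matrix ρ κ ℝ) : Matrix ι κ ℝ :=
  Cᵀ * (C * Cᵀ)⁻¹ * Y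

variable {C : Matrix ρ ι ℝ} {Y : Matrix ρ κ ℝ}

lemma transpose_minNormSolution_mul_of_mul_eq {G : Matrix ι κ ℝ} (hG : C * G = Y) :
    (minNormSolution C Y)ᵀ * G = Yᵀ * (C * Cᵀ)⁻¹ * Y := by
  rw [minNormSolution, transpose_mul, transpose_mul, transpose_transpose, transpose_nonsing_inv,
    transpose_mul, transpose_transpose]
  simp only [Matrix.mul_assoc, hG]

lemma mul_minNormSolution (hC : IsUnit (C * Cᵀ).det) : C * minNormSolution C Y = Y := by
  rw [minNormSolution, ← Matrix.mul_assoc, ← Matrix.mul_assoc, mul_nonsing_inv _ hC,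
    Matrix.one_mul]

lemma sqrt_specNorm_le_of_mul_eq [Fintype κ] [DecidableEq κ] (hC : IsUnit (C * Cᵀ).det)
    {G : Matrix ι κ ℝ} (hG : C * G = Y) :
    Real.sqrt (specNorm (Yᵀ * (C * Cᵀ)⁻¹ * Y)) ≤ specNorm G := by
  have hS := transpose_minNormSolution_mul_of_mul_eq (mul_minNormSolution (Y := Y) hC)
  rw [← hS, specNorm_transpose_mul_self, Real.sqrt_sq (specNorm_nonneg _)]
  refine specNorm_le_of_transpose_mul_eq ?_
  rw [hS, transpose_minNormSolution_mul_of_mul_eq hG]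

lemma isUnit_det_mul_transpose_of_isUnit_det_mul {U : Matrix ι ρ ℝ} (hCU : IsUnit (C * U).det) :
    IsUnit (C * Cᵀ).det := by
  have hinj : Function.Injective C.vecMul := by
    refine Function.Injective.of_comp (f := fun v => v ᵥ* U) ?_
    simpa only [Function.comp_def, vecMul_vecMul] using
      vecMul_injective_iff_isUnit.mpr ((isUnit_iff_isUnit_det _).mpr hCU)
  rw [← isUnit_iff_isUnit_det, ← conjTranspose_eq_transpose_of_trivial]
  exact (PosDef.mul_conjTranspose_self C hinj).isUnit

end Matrix

/-- For any feedback `K` with `A + BK` invertible, the DC closed-loop gain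
satisfies `‖[I; RK](A + BK)⁻¹H‖ ≥ ‖Hᵀ(A² + B(RᵀR)⁻¹Bᵀ)⁻¹H‖^{1/2}`. -/
theorem stmt9
    {n m p : ℕ}
    (A : Matrix (Fin n) (Fin n) ℝ) (hA : (-A).PosDef)
    (B : Matrix (Fin n) (Fin m) ℝ)
    (H : Matrix (Fin n) (Fin p) ℝ)
    (R : Matrix (Fin m) (Fin m) ℝ) (hR : (Rᵀ * R).PosDef)
    (K : Matrix (Fin m) (Fin n) ℝ) (hK : IsUnit (A + B * K).det) :
    Real.sqrt (specNorm (Hᵀ * (A * A + B * (Rᵀ * R)⁻¹ * Bᵀ)⁻¹ * H)) ≤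
      specNorm (fromRows (1 : Matrix (Fin n) (Fin n) ℝ) (R * K) * (A + B * K)⁻¹ * H) := by
  have hAt : Aᵀ = A := by simpa using hA.isHermitian.eq
  have hRdet : IsUnit R.det := by
    have hpos := hR.det_pos
    rw [det_mul, det_transpose] at hpos
    exact isUnit_iff_ne_zero.mpr fun h0 => by simp [h0] at hpos
  set C := fromCols A (B * R⁻¹)
  have hCU : C * fromRows (1 : Matrix (Fin n) (Fin n) ℝ) (R * K) = A + B * K := by
    rw [fromCols_mul_fromRows, Matrix.mul_one, Matrix.mul_assoc, ← Matrix.mul_assoc R⁻¹,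
      nonsing_inv_mul _ hRdet, Matrix.one_mul]
  have hCC : C * Cᵀ = A * A + B * (Rᵀ * R)⁻¹ * Bᵀ := by
    rw [transpose_fromCols, fromCols_mul_fromRows, hAt, transpose_mul, transpose_nonsing_inv,
      Matrix.mul_inv_rev]
    simp only [Matrix.mul_assoc]
  rw [← hCC]
  refine sqrt_specNorm_le_of_mul_eq (isUnit_det_mul_transpose_of_isUnit_det_mul (hCU ▸ hK)) ?_
  rw [← Matrix.mul_assoc, ← Matrix.mul_assoc, hCU, mul_nonsing_inv _ hK, Matrix.one_mul]
end

section
/- Let T := -[I, A⁻¹B(R*R)⁻¹R*] with A ∈ L(Z) self-adjoint strictly negative, B ∈ L(U,Z), R ∈ L(U,R') with R*R coercive. Then the pseudoinverse T† = T*(TT*)⁻¹ satisfies (T†)*T† = (TT*)⁻¹ = (I + A⁻¹B(R*R)⁻¹B*A⁻¹)⁻¹, and consequently ‖T†A⁻¹H‖² = ‖H*(A² + B(R*R)⁻¹B*)⁻¹H‖ for any H ∈ L(D,Z). -/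
/-!
Writing `T = -[I, G]` with `G = A⁻¹B(R*R)⁻¹R*`, one has `TT* = I + GG*`, and since inverses of
self-adjoint operators are self-adjoint, `R*R (R*R)⁻¹ = I` collapses `GG*` to
`A⁻¹B(R*R)⁻¹B*A⁻¹`. With `W = (TT*)⁻¹` self-adjoint, `(T†)*T† = W TT* W = W`. Conjugating by `A`
turns `I + A⁻¹B(R*R)⁻¹B*A⁻¹` into `A² + B(R*R)⁻¹B*`, so `A⁻¹WA⁻¹` is the inverse of the latter,
and the norm identity is the C*-identity `‖S‖² = ‖S*S‖` for `S = T†A⁻¹H`.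
-/

open scoped RealInnerProductSpace
open ContinuousLinearMap

theorem IsSelfAdjoint.of_mul_eq_one_s10 {M : Type*} [Monoid M] [StarMul M] {s v : M}
    (hs : IsSelfAdjoint s) (h : s * v = 1) : IsSelfAdjoint v :=
  left_inv_eq_right_inv (by rw [← hs.star_eq, ← star_mul, h, star_one]) h

/-- `(a² + x)⁻¹ = a⁻¹(1 + a⁻¹xa⁻¹)⁻¹a⁻¹`, from one-sided inverses only. -/
theorem eq_mul_mul_of_sq_add_eq_one {R : Type*} [Ring R] {a a' x w m : R}
    (ha : a * a' = 1) (hw : (1 + a' * (x * a')) * w = 1) (hm : m * (a * a + x) = 1) :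
    m = a' * (w * a') := by
  refine left_inv_eq_right_inv hm ?_
  calc (a * a + x) * (a' * (w * a')) = a * ((1 + a' * (x * a')) * w) * a' := by
        simp only [add_mul, mul_add, one_mul, mul_assoc]
        rw [← mul_assoc a a', ha, one_mul, ← mul_assoc a a' (x * _), ha, one_mul]
    _ = 1 := by rw [hw, mul_one, ha]

section Adjoint

variable {𝕜 E F G : Type*} [RCLike 𝕜]
  [NormedAddCommGroup E] [InnerProductSpace 𝕜 E] [CompleteSpace E]
  [NormedAddCommGroup F] [InnerProductSpace 𝕜 F] [CompleteSpace F]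
  [NormedAddCommGroup G] [InnerProductSpace 𝕜 G] [CompleteSpace G]

theorem isSelfAdjoint_adjoint_comp_self (S : E →L[𝕜] F) :
    IsSelfAdjoint (adjoint S ∘L S) :=
  isSelfAdjoint_iff'.mpr (by rw [adjoint_comp, adjoint_adjoint])

theorem isSelfAdjoint_comp_adjoint_self (S : E →L[𝕜] F) :
    IsSelfAdjoint (S ∘L adjoint S) :=
  isSelfAdjoint_iff'.mpr (by rw [adjoint_comp, adjoint_adjoint])

/-- The row operator `[f, g]` on the Hilbert direct sum `E ⊕₂ F`. -/
noncomputable def l2Coprod (f : E →L[𝕜] G) (g : F →L[𝕜] G) :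
    WithLp 2 (E × F) →L[𝕜] G :=
  f.coprod g ∘L (WithLp.prodContinuousLinearEquiv 2 𝕜 E F : WithLp 2 (E × F) →L[𝕜] E × F)

theorem adjoint_l2Coprod (f : E →L[𝕜] G) (g : F →L[𝕜] G) :
    adjoint (l2Coprod f g) =
      ((WithLp.prodContinuousLinearEquiv 2 𝕜 E F).symm : E × F →L[𝕜] WithLp 2 (E × F)) ∘L
        (adjoint f).prod (adjoint g) := by
  refine ((eq_adjoint_iff _ _).mpr fun x y => ?_).symm
  simp [l2Coprod, WithLp.prod_inner_apply, inner_add_right, adjoint_inner_left]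

theorem l2Coprod_comp_adjoint (f : E →L[𝕜] G) (g : F →L[𝕜] G) :
    l2Coprod f g ∘L adjoint (l2Coprod f g) = f ∘L adjoint f + g ∘L adjoint g := by
  rw [adjoint_l2Coprod]
  ext x
  simp [l2Coprod]

end Adjoint

theorem stmt10_general
    {Z U R' D : Type*}
    [NormedAddCommGroup Z] [InnerProductSpace ℝ Z] [CompleteSpace Z]
    [NormedAddCommGroup U] [InnerProductSpace ℝ U] [CompleteSpace U]
    [NormedAddCommGroup R'] [InnerProductSpace ℝ R'] [CompleteSpace R']
    [NormedAddCommGroup D] [InnerProductSpace ℝ D] [CompleteSpace D]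
    (A : Z →L[ℝ] Z) (hA : IsSelfAdjoint A)
    (B : U →L[ℝ] Z) (R : U →L[ℝ] R')
    (Ainv : Z →L[ℝ] Z) (hAinv₁ : A ∘L Ainv = 1)
    (RRinv : U →L[ℝ] U) (hRRinv₁ : (adjoint R ∘L R) ∘L RRinv = 1)
    (T : WithLp 2 (Z × R') →L[ℝ] Z)
    (hT : T = -(((ContinuousLinearMap.id ℝ Z).coprod (Ainv ∘L B ∘L RRinv ∘L adjoint R)) ∘L
            (WithLp.prodContinuousLinearEquiv 2 ℝ Z R' : WithLp 2 (Z × R') →L[ℝ] Z × R')))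
    -- `W` is the bounded inverse of `TT*`
    (W : Z →L[ℝ] Z) (hW₁ : (T ∘L adjoint T) ∘L W = 1) (hW₂ : W ∘L (T ∘L adjoint T) = 1)
    -- the pseudoinverse `T† = T*(TT*)⁻¹`
    (Tdag : Z →L[ℝ] WithLp 2 (Z × R')) (hTdag : Tdag = adjoint T ∘L W)
    -- `Minv` is the bounded inverse of `M = A² + B(R*R)⁻¹B*`
    (Minv : Z →L[ℝ] Z)
    (hMinv₂ : Minv ∘L (A ∘L A + B ∘L RRinv ∘L adjoint B) = 1)
    (H : D →L[ℝ] Z) :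
    adjoint Tdag ∘L Tdag = W ∧
    W ∘L (1 + Ainv ∘L B ∘L RRinv ∘L adjoint B ∘L Ainv) = 1 ∧
    (1 + Ainv ∘L B ∘L RRinv ∘L adjoint B ∘L Ainv) ∘L W = 1 ∧
    ‖Tdag ∘L Ainv ∘L H‖ ^ 2 = ‖adjoint H ∘L Minv ∘L H‖ := by
  have hAinv : IsSelfAdjoint Ainv := hA.of_mul_eq_one_s10 hAinv₁
  have hRRinv : IsSelfAdjoint RRinv :=
    (isSelfAdjoint_adjoint_comp_self R).of_mul_eq_one_s10 hRRinv₁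
  have hGG : (Ainv ∘L B ∘L RRinv ∘L adjoint R) ∘L adjoint (Ainv ∘L B ∘L RRinv ∘L adjoint R) =
      Ainv ∘L B ∘L RRinv ∘L adjoint B ∘L Ainv := by
    simp only [adjoint_comp, adjoint_adjoint, hAinv.adjoint_eq, hRRinv.adjoint_eq, comp_assoc]
    rw [← comp_assoc (adjoint R) R, ← comp_assoc (adjoint R ∘L R) RRinv, hRRinv₁, one_def,
      id_comp]
  have hTT : T ∘L adjoint T = 1 + Ainv ∘L B ∘L RRinv ∘L adjoint B ∘L Ainv := by
    rw [show T = -l2Coprod (.id ℝ Z) (Ainv ∘L B ∘L RRinv ∘L adjoint R) from hT, map_neg,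
      neg_comp, comp_neg, neg_neg, l2Coprod_comp_adjoint, adjoint_id, id_comp, hGG, one_def]
  have hW : IsSelfAdjoint W := (isSelfAdjoint_comp_adjoint_self T).of_mul_eq_one_s10 hW₁
  have hTdag : adjoint Tdag ∘L Tdag = W := by
    rw [hTdag, adjoint_comp, adjoint_adjoint, hW.adjoint_eq, comp_assoc, ← comp_assoc T, hW₁,
      one_def, comp_id]
  have hMinv : Minv = Ainv ∘L W ∘L Ainv := by
    refine eq_mul_mul_of_sq_add_eq_one hAinv₁ ?_ hMinv₂
    convert hTT ▸ hW₁ using 3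
    simp only [mul_def, comp_assoc]
  refine ⟨hTdag, hTT ▸ hW₂, hTT ▸ hW₁, ?_⟩
  rw [sq, ← norm_adjoint_comp_self, adjoint_comp, adjoint_comp, hAinv.adjoint_eq]
  simp only [comp_assoc]
  rw [← comp_assoc (adjoint Tdag), hTdag, hMinv]
  simp only [comp_assoc]

/-- With `T = -[I, A⁻¹B(R*R)⁻¹R*]`, the pseudoinverse `T† = T*(TT*)⁻¹`
satisfies `(T†)*T† = (TT*)⁻¹ = (I + A⁻¹B(R*R)⁻¹B*A⁻¹)⁻¹`, and consequently
`‖T†A⁻¹H‖² = ‖H*(A² + B(R*R)⁻¹B*)⁻¹H‖` for any bounded `H`. -/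
theorem stmt10
    {Z U R' D : Type*}
    [NormedAddCommGroup Z] [InnerProductSpace ℝ Z] [CompleteSpace Z]
    [NormedAddCommGroup U] [InnerProductSpace ℝ U] [CompleteSpace U]
    [NormedAddCommGroup R'] [InnerProductSpace ℝ R'] [CompleteSpace R']
    [NormedAddCommGroup D] [InnerProductSpace ℝ D] [CompleteSpace D]
    (A : Z →L[ℝ] Z) (hA : IsSelfAdjoint A)
    (m : ℝ) (hm : 0 < m) (hAneg : ∀ z : Z, ⟪A z, z⟫ ≤ -m * ‖z‖ ^ 2)
    (B : U →L[ℝ] Z) (R : U →L[ℝ] R')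
    (c : ℝ) (hc : 0 < c) (hR : ∀ u : U, c * ‖u‖ ^ 2 ≤ ⟪(adjoint R ∘L R) u, u⟫)
    (Ainv : Z →L[ℝ] Z) (hAinv₁ : A ∘L Ainv = 1) (hAinv₂ : Ainv ∘L A = 1)
    (RRinv : U →L[ℝ] U) (hRRinv₁ : (adjoint R ∘L R) ∘L RRinv = 1)
    (hRRinv₂ : RRinv ∘L (adjoint R ∘L R) = 1)
    (T : WithLp 2 (Z × R') →L[ℝ] Z)
    (hT : T = -(((ContinuousLinearMap.id ℝ Z).coprod (Ainv ∘L B ∘L RRinv ∘L adjoint R)) ∘L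
            (WithLp.prodContinuousLinearEquiv 2 ℝ Z R' : WithLp 2 (Z × R') →L[ℝ] Z × R')))
    -- `W` is the bounded inverse of `TT*`
    (W : Z →L[ℝ] Z) (hW₁ : (T ∘L adjoint T) ∘L W = 1) (hW₂ : W ∘L (T ∘L adjoint T) = 1)
    -- the pseudoinverse `T† = T*(TT*)⁻¹`
    (Tdag : Z →L[ℝ] WithLp 2 (Z × R')) (hTdag : Tdag = adjoint T ∘L W)
    -- `Minv` is the bounded inverse of `M = A² + B(R*R)⁻¹B*`
    (Minv : Z →L[ℝ] Z)
    (hMinv₁ : (A ∘L A + B ∘L RRinv ∘L adjoint B) ∘L Minv = 1)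
    (hMinv₂ : Minv ∘L (A ∘L A + B ∘L RRinv ∘L adjoint B) = 1)
    (H : D →L[ℝ] Z) :
    adjoint Tdag ∘L Tdag = W ∧
    W ∘L (1 + Ainv ∘L B ∘L RRinv ∘L adjoint B ∘L Ainv) = 1 ∧
    (1 + Ainv ∘L B ∘L RRinv ∘L adjoint B ∘L Ainv) ∘L W = 1 ∧
    ‖Tdag ∘L Ainv ∘L H‖ ^ 2 = ‖adjoint H ∘L Minv ∘L H‖ :=
  stmt10_general A hA B R Ainv hAinv₁ RRinv hRRinv₁ T hT W hW₁ hW₂ Tdag hTdag Minv hMinv₂ H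
end

section
/- Let A ∈ ℝ^{n×n} be symmetric negative definite, C ∈ ℝ^{p×n}, Q ∈ ℝ^{q×n}, S ∈ ℝ^{p×p} with SS^T ≻ 0. Then the observer gain L = A⁻¹C^T(SS^T)⁻¹ makes A + LC Hurwitz, and the DC gain of the error system e ↦ Qe driven by (w, Sv) equals ‖Q(A² + C^T(SS^T)⁻¹C)⁻¹Q^T‖^{1/2}, which is minimal over all L making A + LC invertible. -/
/-!
With `R = S Sᵀ` and `Y = [A; S⁻¹ C]` one has `Yᵀ Y = A² + Cᵀ R⁻¹ C =: M`, and for every gain `L'`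
the error-system gain factors as `-Q E'` with `E' = (A + L'C)⁻¹ [I, L'S]`, a left inverse of `Y`.
Among all left inverses of `Y`, the least-squares one `M⁻¹ Yᵀ` has minimal operator norm after
multiplication by `Q` (Pythagoras: any other left inverse differs from it by a matrix whose rows
are orthogonal to its rows), and `‖Q M⁻¹ Yᵀ‖² = ‖Q M⁻¹ Qᵀ‖`. The gain `L = A⁻¹ Cᵀ R⁻¹` is exactly
the one with `E = M⁻¹ Yᵀ`, since `A (A + LC) = M`. The same identity shows `A + LC = A⁻¹ M`;
an eigenvector `v` then gives `v* M v = μ v* A v` with `v* M v > 0 > v* A v`, so `μ` is real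
and negative.
-/

open Matrix

open scoped Matrix.Norms.L2Operator MatrixOrder ComplexOrder

section SpecNorm

variable {m k l : Type*} [Fintype m] [Fintype k] [Fintype l] [DecidableEq k]

theorem specNorm_neg_mul_mul (Q : Matrix l m ℝ) (K : Matrix m m ℝ) (B : Matrix m k ℝ) :
    specNorm (-(Q * K) * B) = specNorm (Q * (K * B)) := by
  rw [Matrix.neg_mul, Matrix.mul_assoc]
  exact norm_neg (Q * (K * B))

theorem specNorm_eq_sqrt_specNorm_mul_transpose [DecidableEq m] (G : Matrix m k ℝ) :
    specNorm G = √(specNorm (G * Gᵀ)) := by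
  have h := l2_opNorm_conjTranspose_mul_self Gᵀ
  rw [conjTranspose_eq_transpose_of_trivial, transpose_transpose,
    ← conjTranspose_eq_transpose_of_trivial, l2_opNorm_conjTranspose,
    conjTranspose_eq_transpose_of_trivial] at h
  change ‖G‖ = √‖G * Gᵀ‖
  rw [h, Real.sqrt_mul_self (norm_nonneg _)]

theorem specNorm_le_specNorm_add [DecidableEq m] {G H : Matrix m k ℝ} (hGH : G * Hᵀ = 0) :
    specNorm G ≤ specNorm (G + H) := by
  change ‖G‖ ≤ ‖G + H‖
  rw [← l2_opNorm_conjTranspose G, ← l2_opNorm_conjTranspose (G + H), l2_opNorm_def]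
  refine ContinuousLinearMap.opNorm_le_bound _ (norm_nonneg _) fun x => ?_
  set u : EuclideanSpace ℝ k := WithLp.toLp 2 (Gᵀ *ᵥ WithLp.ofLp x)
  set w : EuclideanSpace ℝ k := WithLp.toLp 2 (Hᵀ *ᵥ WithLp.ofLp x)
  have horth : inner ℝ u w = 0 := by
    rw [EuclideanSpace.inner_eq_star_dotProduct, star_trivial]
    simp only [u, w, ← vecMul_transpose, transpose_transpose, ← dotProduct_mulVec, vecMul_vecMul,
      hGH, vecMul_zero, dotProduct_zero]
  have hsum : (WithLp.toLp 2 ((G + H)ᴴ *ᵥ WithLp.ofLp x) : EuclideanSpace ℝ k) = u + w := by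
    simp [u, w, conjTranspose_eq_transpose_of_trivial, add_mulVec]
  calc ‖u‖ ≤ ‖u + w‖ := by
        rw [mul_self_le_mul_self_iff (norm_nonneg _) (norm_nonneg _),
          norm_add_sq_eq_norm_sq_add_norm_sq_real horth]
        exact le_add_of_nonneg_right (mul_self_nonneg _)
    _ = _ := by rw [← hsum]; rfl
    _ ≤ ‖(G + H)ᴴ‖ * ‖x‖ := l2_opNorm_mulVec _ x

end SpecNorm

section LeftInverse

variable {m k l : Type*} [Fintype m] [Fintype k] [Fintype l] [DecidableEq m]

theorem posDef_transpose_mul_self_of_mul_eq_one {E : Matrix m k ℝ} {Y : Matrix k m ℝ}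
    (hEY : E * Y = 1) : (Yᵀ * Y).PosDef :=
  PosDef.conjTranspose_mul_self Y fun x y hxy => by
    simpa [mulVec_mulVec, hEY] using congrArg (E *ᵥ ·) hxy

theorem pinv_mul_transpose_pinv {Y : Matrix k m ℝ} (hY : IsUnit (Yᵀ * Y)) :
    (Yᵀ * Y)⁻¹ * Yᵀ * ((Yᵀ * Y)⁻¹ * Yᵀ)ᵀ = (Yᵀ * Y)⁻¹ := by
  rw [transpose_mul, transpose_transpose, transpose_nonsing_inv, transpose_mul,
    transpose_transpose, Matrix.mul_assoc, ← Matrix.mul_assoc Yᵀ,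
    mul_nonsing_inv _ ((isUnit_iff_isUnit_det _).mp hY), Matrix.mul_one]

theorem specNorm_mul_pinv [DecidableEq l] [DecidableEq k] (Q : Matrix l m ℝ)
    {Y : Matrix k m ℝ} (hY : IsUnit (Yᵀ * Y)) :
    specNorm (Q * ((Yᵀ * Y)⁻¹ * Yᵀ)) = √(specNorm (Q * (Yᵀ * Y)⁻¹ * Qᵀ)) := by
  rw [specNorm_eq_sqrt_specNorm_mul_transpose, transpose_mul, Matrix.mul_assoc,
    ← Matrix.mul_assoc _ _ Qᵀ, pinv_mul_transpose_pinv hY, Matrix.mul_assoc]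

theorem specNorm_mul_pinv_le [DecidableEq l] [DecidableEq k] (Q : Matrix l m ℝ)
    {E : Matrix m k ℝ} {Y : Matrix k m ℝ} (hEY : E * Y = 1) :
    specNorm (Q * ((Yᵀ * Y)⁻¹ * Yᵀ)) ≤ specNorm (Q * E) := by
  set E₀ := (Yᵀ * Y)⁻¹ * Yᵀ
  have hY : IsUnit (Yᵀ * Y) := (posDef_transpose_mul_self_of_mul_eq_one hEY).isUnit
  have horth : E₀ * (E - E₀)ᵀ = 0 := by
    rw [transpose_sub, Matrix.mul_sub, pinv_mul_transpose_pinv hY, Matrix.mul_assoc,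
      ← transpose_mul, hEY, transpose_one, Matrix.mul_one, sub_self]
  have h := specNorm_le_specNorm_add (G := Q * E₀) (H := Q * (E - E₀)) (by
    rw [transpose_mul, Matrix.mul_assoc, ← Matrix.mul_assoc E₀, horth, Matrix.zero_mul,
      Matrix.mul_zero])
  rwa [← Matrix.mul_add, add_sub_cancel] at h

end LeftInverse

section Hurwitz

variable {m : Type*} [Fintype m]

theorem map_ofReal_mul {l k : Type*} (M : Matrix l m ℝ) (N : Matrix m k ℝ) :
    (M * N).map Complex.ofReal = M.map Complex.ofReal * N.map Complex.ofReal :=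
  Matrix.map_mul (f := Complex.ofRealHom)

variable [DecidableEq m]

theorem posDef_map_ofReal {P : Matrix m m ℝ} (hP : P.PosDef) :
    (P.map Complex.ofReal).PosDef := by
  obtain ⟨B, hB⟩ : ∃ B, star B * B = P := ⟨CFC.sqrt P, by
    rw [(CFC.sqrt_nonneg P).isSelfAdjoint.star_eq, CFC.sqrt_mul_sqrt_self P hP.posSemidef.nonneg]⟩
  have hgram : P.map Complex.ofReal = (B.map Complex.ofReal)ᴴ * B.map Complex.ofReal := by
    rw [← hB, map_ofReal_mul, star_eq_conjTranspose,
      conjTranspose_map _ fun r => (Complex.conj_ofReal r).symm]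
  refine (hgram ▸ posSemidef_conjTranspose_mul_self _).posDef_iff_det_ne_zero.mpr ?_
  rw [show P.map Complex.ofReal = Complex.ofRealHom.mapMatrix P from rfl, ← RingHom.map_det]
  exact Complex.ofReal_ne_zero.mpr hP.det_pos.ne'

theorem re_neg_of_mem_spectrum {N P X : Matrix m m ℝ} (hN : N.PosDef) (hP : P.PosDef)
    (hX : N * X = -P) {μ : ℂ} (hμ : μ ∈ spectrum ℂ (X.map Complex.ofReal)) : μ.re < 0 := by
  rw [← spectrum_toLin', ← Module.End.hasEigenvalue_iff_mem_spectrum] at hμ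
  obtain ⟨v, hXv, hv⟩ := hμ.exists_hasEigenvector
  rw [Module.End.mem_eigenspace_iff, toLin'_apply] at hXv
  have hNv := (posDef_map_ofReal hN).dotProduct_mulVec_pos hv
  have hPv := (posDef_map_ofReal hP).dotProduct_mulVec_pos hv
  have heq : star v ⬝ᵥ (P.map Complex.ofReal *ᵥ v) =
      -(μ * (star v ⬝ᵥ (N.map Complex.ofReal *ᵥ v))) := by
    rw [← neg_neg P, ← hX, Matrix.map_neg _ Complex.ofReal_neg, map_ofReal_mul, neg_mulVec,
      ← mulVec_mulVec, hXv, mulVec_smul, dotProduct_neg, dotProduct_smul, smul_eq_mul]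
  rw [Complex.pos_iff] at hNv hPv
  rw [heq, Complex.neg_re, Complex.mul_re, ← hNv.2] at hPv
  nlinarith [hPv.1, hNv.1]

end Hurwitz

section ObserverGain

variable {n p : Type*} [Fintype n] [Fintype p] [DecidableEq p]
  (A : Matrix n n ℝ) (C : Matrix p n ℝ) (S : Matrix p p ℝ)

theorem fromRows_transpose_mul_self (hA : Aᵀ = A) :
    (fromRows A (S⁻¹ * C))ᵀ * fromRows A (S⁻¹ * C) = A * A + Cᵀ * (S * Sᵀ)⁻¹ * C := by
  rw [transpose_fromRows, fromCols_mul_fromRows, hA, Matrix.mul_inv_rev, ← transpose_nonsing_inv,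
    transpose_mul]
  simp only [Matrix.mul_assoc]

theorem posDef_fromRows_transpose_mul_self [DecidableEq n] (hA : IsUnit A) :
    ((fromRows A (S⁻¹ * C))ᵀ * fromRows A (S⁻¹ * C)).PosDef :=
  posDef_transpose_mul_self_of_mul_eq_one (E := fromCols A⁻¹ 0) <| by
    rw [fromCols_mul_fromRows, Matrix.zero_mul, add_zero,
      nonsing_inv_mul _ ((isUnit_iff_isUnit_det A).mp hA)]

theorem fromCols_mul_fromRows_inv_mul [DecidableEq n] (hS : IsUnit S) (L : Matrix n p ℝ) :
    fromCols (1 : Matrix n n ℝ) (L * S) * fromRows A (S⁻¹ * C) = A + L * C := by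
  rw [fromCols_mul_fromRows, Matrix.one_mul, Matrix.mul_assoc,
    mul_nonsing_inv_cancel_left _ _ ((isUnit_iff_isUnit_det S).mp hS)]

theorem mul_add_optimalGain_mul [DecidableEq n] (hA : IsUnit A) :
    A * (A + A⁻¹ * Cᵀ * (S * Sᵀ)⁻¹ * C) = A * A + Cᵀ * (S * Sᵀ)⁻¹ * C := by
  rw [Matrix.mul_add]
  simp only [Matrix.mul_assoc, mul_nonsing_inv_cancel_left _ _ ((isUnit_iff_isUnit_det A).mp hA)]

theorem inv_add_optimalGain_mul_fromCols [DecidableEq n] (hAsymm : Aᵀ = A) (hA : IsUnit A)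
    (hS : IsUnit S) :
    (A + A⁻¹ * Cᵀ * (S * Sᵀ)⁻¹ * C)⁻¹ *
        fromCols (1 : Matrix n n ℝ) (A⁻¹ * Cᵀ * (S * Sᵀ)⁻¹ * S) =
      ((fromRows A (S⁻¹ * C))ᵀ * fromRows A (S⁻¹ * C))⁻¹ * (fromRows A (S⁻¹ * C))ᵀ := by
  have := hA.invertible
  have := hS.invertible
  have hAB : A * fromCols (1 : Matrix n n ℝ) (A⁻¹ * Cᵀ * (S * Sᵀ)⁻¹ * S) =
      (fromRows A (S⁻¹ * C))ᵀ := by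
    rw [transpose_fromRows, mul_fromCols, Matrix.mul_inv_rev, ← transpose_nonsing_inv, hAsymm,
      transpose_mul]
    simp only [Matrix.mul_one, Matrix.mul_assoc, Matrix.mul_inv_cancel_left_of_invertible,
      Matrix.inv_mul_of_invertible]
  rw [fromRows_transpose_mul_self A C S hAsymm, ← mul_add_optimalGain_mul A C S hA,
    Matrix.mul_inv_rev A, ← hAB]
  simp only [Matrix.mul_assoc, inv_mul_cancel_left_of_invertible]

end ObserverGain

/-- The observer gain `L = A⁻¹Cᵀ(SSᵀ)⁻¹` makes `A + LC` Hurwitz, the DC gain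
of the error system equals `‖Q(A² + Cᵀ(SSᵀ)⁻¹C)⁻¹Qᵀ‖^{1/2}`, and this value is minimal over
all gains `L'` making `A + L'C` invertible. -/
theorem stmt13
    {n p q : ℕ}
    (A : Matrix (Fin n) (Fin n) ℝ) (hA : (-A).PosDef)
    (C : Matrix (Fin p) (Fin n) ℝ)
    (Q : Matrix (Fin q) (Fin n) ℝ)
    (S : Matrix (Fin p) (Fin p) ℝ) (hS : (S * Sᵀ).PosDef)
    (L : Matrix (Fin n) (Fin p) ℝ) (hL : L = A⁻¹ * Cᵀ * (S * Sᵀ)⁻¹) :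
    (∀ μ ∈ spectrum ℂ ((A + L * C).map (Complex.ofReal)), μ.re < 0) ∧
    specNorm (-(Q * (A + L * C)⁻¹) * fromCols (1 : Matrix (Fin n) (Fin n) ℝ) (L * S)) =
      Real.sqrt (specNorm (Q * (A * A + Cᵀ * (S * Sᵀ)⁻¹ * C)⁻¹ * Qᵀ)) ∧
    (∀ L' : Matrix (Fin n) (Fin p) ℝ, IsUnit (A + L' * C).det →
      Real.sqrt (specNorm (Q * (A * A + Cᵀ * (S * Sᵀ)⁻¹ * C)⁻¹ * Qᵀ)) ≤
        specNorm (-(Q * (A + L' * C)⁻¹) *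
          fromCols (1 : Matrix (Fin n) (Fin n) ℝ) (L' * S))) := by
  have hAsymm : Aᵀ = A := by
    simpa [conjTranspose_eq_transpose_of_trivial] using hA.isHermitian.eq
  have hAunit : IsUnit A := by simpa using hA.isUnit
  have hSunit : IsUnit S := isUnit_of_mul_isUnit_left hS.isUnit
  have hM := posDef_fromRows_transpose_mul_self A C S hAunit
  subst hL
  refine ⟨fun μ => re_neg_of_mem_spectrum hA hM ?_, ?_, fun L' hL' => ?_⟩
  · rw [Matrix.neg_mul, mul_add_optimalGain_mul A C S hAunit,
      fromRows_transpose_mul_self A C S hAsymm]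
  · rw [specNorm_neg_mul_mul,
      inv_add_optimalGain_mul_fromCols A C S hAsymm hAunit hSunit, specNorm_mul_pinv Q hM.isUnit,
      fromRows_transpose_mul_self A C S hAsymm]
  · rw [specNorm_neg_mul_mul, ← fromRows_transpose_mul_self A C S hAsymm,
      ← specNorm_mul_pinv Q hM.isUnit]
    refine specNorm_mul_pinv_le Q ?_
    rw [Matrix.mul_assoc, fromCols_mul_fromRows_inv_mul A C S hSunit, nonsing_inv_mul _ hL']
end

section
/- Let A ∈ L(Z) be self-adjoint and strictly negative and B ∈ L(U,Z), R ∈ L(U,R') with R*R coercive. Then A + B(R*R)⁻¹B*A⁻¹ is boundedly invertible, and for every real ω, jωI - (A + B(R*R)⁻¹B*A⁻¹) is boundedly invertible with (jωI - A - B(R*R)⁻¹B*A⁻¹)⁻¹ = -A M⁻¹_ω where M_ω := A² + B(R*R)⁻¹B* - jωA and M_ω is boundedly invertible. -/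
open scoped ComplexInnerProductSpace
open ContinuousLinearMap

/-!
`Re ⟪M_ω z, z⟫ = ‖A z‖² + Re ⟪(R*R)⁻¹ B* z, B* z⟫ ≥ m² ‖z‖²`: the term `jω ⟪A z, z⟫` is purely
imaginary since `A` is self-adjoint, the middle term is nonnegative because a right inverse of
the positive operator `R*R` has nonnegative real numerical range, and `‖A z‖ ≥ m ‖z‖`. Hence
`M_ω` is invertible (Lax–Milgram), and the rest is the factorisation
`jωI - A - B(R*R)⁻¹B*A⁻¹ = -M_ω A⁻¹`.
-/

namespace ContinuousLinearMap

section RCLike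

variable {𝕜 E F : Type*} [RCLike 𝕜]
  [NormedAddCommGroup E] [InnerProductSpace 𝕜 E] [NormedAddCommGroup F] [InnerProductSpace 𝕜 F]

open RCLike

theorem isUnit_of_forall_le_re_inner_map [CompleteSpace E] (T : E →L[𝕜] E) {k : ℝ} (hk : 0 < k)
    (h : ∀ z, k * ‖z‖ ^ 2 ≤ re (inner 𝕜 (T z) z)) : IsUnit T :=
  isUnit_of_forall_le_norm_inner_map T (c := ⟨k, hk.le⟩) hk fun z =>
    calc ‖z‖ ^ 2 * k = k * ‖z‖ ^ 2 := mul_comm _ _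
      _ ≤ re (inner 𝕜 (T z) z) := h z
      _ ≤ ‖inner 𝕜 (T z) z‖ := re_le_norm _

theorem mul_norm_le_norm_of_re_inner_le_neg (T : E →L[𝕜] E) {k : ℝ}
    (h : ∀ z, re (inner 𝕜 (T z) z) ≤ -k * ‖z‖ ^ 2) (z : E) : k * ‖z‖ ≤ ‖T z‖ := by
  rcases (norm_nonneg z).eq_or_lt with hz | hz
  · simp [← hz]
  refine le_of_mul_le_mul_right ?_ hz
  calc k * ‖z‖ * ‖z‖ ≤ -re (inner 𝕜 (T z) z) := by linarith [h z]
    _ ≤ ‖inner 𝕜 (T z) z‖ := (neg_le_abs _).trans (abs_re_le_norm _)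
    _ ≤ ‖T z‖ * ‖z‖ := norm_inner_le_norm _ _

theorem _root_.IsSelfAdjoint.re_inner_comp_self_apply [CompleteSpace E] {A : E →L[𝕜] E}
    (hA : IsSelfAdjoint A) (z : E) : re (inner 𝕜 ((A ∘L A) z) z) = ‖A z‖ ^ 2 :=
  (congrArg re (hA.isSymmetric (A z) z)).trans (inner_self_eq_norm_sq _)

theorem re_inner_map_self_nonneg_of_comp_eq_one {S : F →L[𝕜] F} (hS : S.IsPositive)
    {P : F →L[𝕜] F} (hP : S ∘L P = 1) (v : F) : 0 ≤ re (inner 𝕜 (P v) v) := by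
  have hv : S (P v) = v := by simpa using congr($hP v)
  nth_rewrite 2 [← hv]
  rw [← inner_conj_symm, conj_re]
  exact hS.re_inner_nonneg_left (P v)

theorem re_inner_comp_comp_adjoint_nonneg [CompleteSpace E] [CompleteSpace F] (B : F →L[𝕜] E)
    {P : F →L[𝕜] F} (hP : ∀ v, 0 ≤ re (inner 𝕜 (P v) v)) (z : E) :
    0 ≤ re (inner 𝕜 ((B ∘L P ∘L adjoint B) z) z) := by
  simpa only [comp_apply, ← adjoint_inner_right] using hP (adjoint B z)

end RCLike

section Complex

variable {E : Type*} [NormedAddCommGroup E] [InnerProductSpace ℂ E] [CompleteSpace E]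

theorem _root_.IsSelfAdjoint.re_inner_smul_I_apply_self {A : E →L[ℂ] E} (hA : IsSelfAdjoint A)
    (ω : ℝ) (z : E) : (⟪(((ω : ℂ) * Complex.I) • A) z, z⟫).re = 0 := by
  have hreal := hA.isSymmetric.coe_re_inner_apply_self z
  rw [coe_coe] at hreal
  rw [smul_apply, inner_smul_left, ← hreal]
  simp

theorem le_re_inner_comp_self_add_sub_smul_apply {A D : E →L[ℂ] E} (hA : IsSelfAdjoint A) {m : ℝ}
    (hm : 0 ≤ m) (hAneg : ∀ z, (⟪A z, z⟫).re ≤ -m * ‖z‖ ^ 2) (hD : ∀ z, 0 ≤ (⟪D z, z⟫).re)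
    (ω : ℝ) (z : E) :
    m ^ 2 * ‖z‖ ^ 2 ≤ (⟪(A ∘L A + D - ((ω : ℂ) * Complex.I) • A) z, z⟫).re := by
  have hAz : m * ‖z‖ ≤ ‖A z‖ := mul_norm_le_norm_of_re_inner_le_neg A hAneg z
  have hAAz : (⟪(A ∘L A) z, z⟫).re = ‖A z‖ ^ 2 := hA.re_inner_comp_self_apply z
  rw [sub_apply, add_apply, inner_sub_left, inner_add_left, Complex.sub_re, Complex.add_re, hAAz,
    hA.re_inner_smul_I_apply_self]
  nlinarith [hD z, mul_nonneg hm (norm_nonneg z)]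

theorem isUnit_comp_self_add_sub_smul {A D : E →L[ℂ] E} (hA : IsSelfAdjoint A) {m : ℝ}
    (hm : 0 < m) (hAneg : ∀ z, (⟪A z, z⟫).re ≤ -m * ‖z‖ ^ 2) (hD : ∀ z, 0 ≤ (⟪D z, z⟫).re)
    (ω : ℝ) : IsUnit (A ∘L A + D - ((ω : ℂ) * Complex.I) • A) :=
  isUnit_of_forall_le_re_inner_map _ (by positivity)
    (le_re_inner_comp_self_add_sub_smul_apply hA hm.le hAneg hD ω)

end Complex

end ContinuousLinearMap

theorem stmt19_general
    {Z U R' : Type*}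
    [NormedAddCommGroup Z] [InnerProductSpace ℂ Z] [CompleteSpace Z]
    [NormedAddCommGroup U] [InnerProductSpace ℂ U] [CompleteSpace U]
    [NormedAddCommGroup R'] [InnerProductSpace ℂ R'] [CompleteSpace R']
    (A : Z →L[ℂ] Z) (hA : IsSelfAdjoint A)
    (m : ℝ) (hm : 0 < m) (hAneg : ∀ z : Z, (⟪A z, z⟫).re ≤ -m * ‖z‖ ^ 2)
    (B : U →L[ℂ] Z) (R : U →L[ℂ] R')
    (Ainv : Z →L[ℂ] Z) (hAinv₁ : A ∘L Ainv = 1) (hAinv₂ : Ainv ∘L A = 1)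
    (RRinv : U →L[ℂ] U) (hRRinv₁ : (adjoint R ∘L R) ∘L RRinv = 1)
    (Acl : Z →L[ℂ] Z) (hAcl : Acl = A + B ∘L RRinv ∘L adjoint B ∘L Ainv) :
    (∃ V : Z →L[ℂ] Z, Acl ∘L V = 1 ∧ V ∘L Acl = 1) ∧
    ∀ ω : ℝ, ∀ Mω : Z →L[ℂ] Z,
      Mω = A ∘L A + B ∘L RRinv ∘L adjoint B - ((ω : ℂ) * Complex.I) • A →
      ∃ W : Z →L[ℂ] Z, (Mω ∘L W = 1 ∧ W ∘L Mω = 1) ∧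
        ((((ω : ℂ) * Complex.I) • (1 : Z →L[ℂ] Z) - Acl) ∘L (-(A ∘L W)) = 1 ∧
         (-(A ∘L W)) ∘L (((ω : ℂ) * Complex.I) • (1 : Z →L[ℂ] Z) - Acl) = 1) := by
  set D := B ∘L RRinv ∘L adjoint B
  have hAAinv : A * Ainv = 1 := hAinv₁
  have hAinvA : Ainv * A = 1 := hAinv₂
  have hD : ∀ z, 0 ≤ (⟪D z, z⟫).re := re_inner_comp_comp_adjoint_nonneg B
    (re_inner_map_self_nonneg_of_comp_eq_one (isPositive_adjoint_comp_self R) hRRinv₁)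
  have hM := isUnit_comp_self_add_sub_smul hA hm hAneg hD
  have hAcl_mul : Acl = (A ∘L A + D) * Ainv := by
    rw [hAcl, add_mul, mul_def, comp_assoc, hAinv₁, ← mul_def, mul_one]
    rfl
  have hM₀ : IsUnit (A ∘L A + D) := by simpa using hM 0
  refine ⟨isUnit_iff_exists.mp ?_, fun ω Mω hMω => ?_⟩
  · rw [hAcl_mul]
    exact hM₀.mul ⟨⟨Ainv, A, hAinvA, hAAinv⟩, rfl⟩
  obtain ⟨W, hW₁, hW₂⟩ := isUnit_iff_exists.mp (hMω ▸ hM ω)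
  have hshift : ((ω : ℂ) * Complex.I) • (1 : Z →L[ℂ] Z) - Acl = -(Mω * Ainv) := by
    rw [hMω, hAcl_mul, sub_mul, smul_mul_assoc, hAAinv]
    abel
  refine ⟨W, ⟨hW₁, hW₂⟩, ?_, ?_⟩ <;> rw [← mul_def, ← mul_def, hshift]
  · calc -(Mω * Ainv) * -(A * W) = Mω * (Ainv * A) * W := by noncomm_ring
      _ = 1 := by rw [hAinvA, mul_one, hW₁]
  · calc -(A * W) * -(Mω * Ainv) = A * (W * Mω) * Ainv := by noncomm_ring
      _ = 1 := by rw [hW₂, mul_one, hAAinv]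

/-- `A + B(R*R)⁻¹B*A⁻¹` is boundedly invertible and for every real `ω`,
`jωI - (A + B(R*R)⁻¹B*A⁻¹)` is boundedly invertible with inverse `-A M_ω⁻¹`, where
`M_ω = A² + B(R*R)⁻¹B* - jωA` is boundedly invertible. -/
theorem stmt19
    {Z U R' : Type*}
    [NormedAddCommGroup Z] [InnerProductSpace ℂ Z] [CompleteSpace Z]
    [NormedAddCommGroup U] [InnerProductSpace ℂ U] [CompleteSpace U]
    [NormedAddCommGroup R'] [InnerProductSpace ℂ R'] [CompleteSpace R']
    (A : Z →L[ℂ] Z) (hA : IsSelfAdjoint A)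
    (m : ℝ) (hm : 0 < m) (hAneg : ∀ z : Z, (⟪A z, z⟫).re ≤ -m * ‖z‖ ^ 2)
    (B : U →L[ℂ] Z) (R : U →L[ℂ] R')
    (c : ℝ) (hc : 0 < c) (hR : ∀ u : U, c * ‖u‖ ^ 2 ≤ (⟪(adjoint R ∘L R) u, u⟫).re)
    (Ainv : Z →L[ℂ] Z) (hAinv₁ : A ∘L Ainv = 1) (hAinv₂ : Ainv ∘L A = 1)
    (RRinv : U →L[ℂ] U) (hRRinv₁ : (adjoint R ∘L R) ∘L RRinv = 1)
    (hRRinv₂ : RRinv ∘L (adjoint R ∘L R) = 1)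
    (Acl : Z →L[ℂ] Z) (hAcl : Acl = A + B ∘L RRinv ∘L adjoint B ∘L Ainv) :
    (∃ V : Z →L[ℂ] Z, Acl ∘L V = 1 ∧ V ∘L Acl = 1) ∧
    ∀ ω : ℝ, ∀ Mω : Z →L[ℂ] Z,
      Mω = A ∘L A + B ∘L RRinv ∘L adjoint B - ((ω : ℂ) * Complex.I) • A →
      ∃ W : Z →L[ℂ] Z, (Mω ∘L W = 1 ∧ W ∘L Mω = 1) ∧
        ((((ω : ℂ) * Complex.I) • (1 : Z →L[ℂ] Z) - Acl) ∘L (-(A ∘L W)) = 1 ∧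
         (-(A ∘L W)) ∘L (((ω : ℂ) * Complex.I) • (1 : Z →L[ℂ] Z) - Acl) = 1) :=
  stmt19_general A hA m hm hAneg B R Ainv hAinv₁ hAinv₂ RRinv hRRinv₁ Acl hAcl
end
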